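/- Let \mathbf{Z} = (Z_{(i-2)n+t})_{i=1..p+1, t=1..n}, \widehat{\mathbf{X}} = \mathbf{Z}\Omega \in \mathbb{R}^{(p+1)\times(n+1)} with \Omega as in the definition of the simplified model, and \overline{\mathbf{X}} = \begin{pmatrix} 0 & 0 \\ 0 & \widetilde{\mathbf{X}} \end{pmatrix} \in \mathbb{R}^{(p+1)\times(n+1)}, where \widetilde{\mathbf{X}} = (\sum_{j=0}^n c_j Z_{(i-1)n+t-j})_{it} \in \mathbb{R}^{p\times n}. Under condition (Z1) on (Z_t) and |c_j| \le C(j+1)^{-1-\delta} (C, \delta > 0), in the regime p/n \to y \in (0,\infty): p^{-4} E[\mathrm{tr}((\widehat{\mathbf{X}}-\overline{\mathbf{X}})(\widehat{\mathbf{X}}-\overline{\mathbf{X}})^T)]^2 = O(n^{-2}). -/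

import Mathlib

/-!
Each entry of `𝐗̂ - 𝐗̄` is a finite linear combination of the `Z_s`. In entry `(a, t)` with
`a, t ≥ 1`, the first band of `ZΩ` and the entry of `𝐗̃` share the terms `c_j Z_{an+t-n-j}`,
`j < t`, so only coefficients `c_j` with `j ≥ t` survive; on the zero border the full
sequence `c_0, …, c_{n+1}` may appear. For independent centred `Z_s` with fourth moments at
most `σ₄`, `E(∑ u_s Z_s)⁴ ≤ max(σ₄, 3) (∑ u_s²)²`, so by Minkowski's inequality in `L²`,
`E tr((𝐗̂ - 𝐗̄)(𝐗̂ - 𝐗̄)ᵀ)²` is at most a constant times `(∑_{a,t} ∑_{j ≥ t} c_j²)²`, the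
border rows and columns contributing `∑_j c_j²` each. Exchanging sums,
`∑_t ∑_{j ≥ t} c_j² = ∑_j (j+1) c_j² ≤ C² ∑_j (j+1)^{-1-2δ} < ∞`, so the bound is
`O((n + p)²)`, and `p ≍ y n` turns `p⁻⁴ (n + p)²` into `O(n⁻²)`.
-/

open MeasureTheory ProbabilityTheory Matrix Filter Topology ENNReal

/-- The `m × m` shift matrix `K_m`, with ones on the subdiagonal. -/
def Kmat (m : ℕ) : Matrix (Fin m) (Fin m) ℝ :=
  Matrix.of fun i j => if (i : ℕ) = (j : ℕ) + 1 then 1 else 0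

/-- `χ_m(K_mᵀ) = ∑_{j=0}^m c_j (K_mᵀ)^j`. -/
noncomputable def chiK (c : ℕ → ℝ) (m : ℕ) : Matrix (Fin m) (Fin m) ℝ :=
  ∑ j ∈ Finset.range (m + 1), c j • ((Kmat m)ᵀ) ^ j

/-- `χ̄_m(K_m) = ∑_{j=0}^m c_{m-j} (K_m)^j`. -/
noncomputable def chibarK (c : ℕ → ℝ) (m : ℕ) : Matrix (Fin m) (Fin m) ℝ :=
  ∑ j ∈ Finset.range (m + 1), c (m - j) • (Kmat m) ^ j

/-- `Ω = [0 1_n 1_n 0] ⬝ [χ_{n+1}(K_{n+1}ᵀ) ; χ̄_{n+1}(K_{n+1})] ∈ ℝ^{n × (n+1)}`. -/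
noncomputable def OmegaMat (c : ℕ → ℝ) (n : ℕ) : Matrix (Fin n) (Fin (n + 1)) ℝ :=
  (Matrix.fromCols
      (Matrix.of fun (i : Fin n) (j : Fin (n + 1)) => if (j : ℕ) = (i : ℕ) + 1 then (1:ℝ) else 0)
      (Matrix.of fun (i : Fin n) (j : Fin (n + 1)) => if (j : ℕ) = (i : ℕ) then (1:ℝ) else 0))
    * (Matrix.fromRows (chiK c (n + 1)) (chibarK c (n + 1)))

/-- Bordering a `p × n` matrix with a zero first row and a zero first column. -/
def border {p n : ℕ} (A : Matrix (Fin p) (Fin n) ℝ) : Matrix (Fin (p + 1)) (Fin (n + 1)) ℝ :=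
  Matrix.of fun i j =>
    if hi : (i : ℕ) = 0 then 0
    else if hj : (j : ℕ) = 0 then 0
    else A ⟨(i : ℕ) - 1, by have := i.isLt; omega⟩ ⟨(j : ℕ) - 1, by have := j.isLt; omega⟩

open Asymptotics

section Moments

variable {Ω : Type*} [MeasurableSpace Ω] {μ : Measure Ω}

lemma MeasureTheory.MemLp.integrable_pow_of_le [IsFiniteMeasure μ] {f : Ω → ℝ} {n k : ℕ}
    (hf : MemLp f n μ) (hk : k ≤ n) : Integrable (fun ω => f ω ^ k) μ := by
  have hfk : MemLp f k μ := hf.mono_exponent (by exact_mod_cast hk)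
  refine (integrable_norm_iff (hf.1.pow k)).1 ?_
  simpa only [Pi.pow_apply, norm_pow] using hfk.integrable_norm_pow'

lemma MeasureTheory.memLp_of_integrable_pow_of_even {f : Ω → ℝ} {n : ℕ} (hn : Even n)
    (hn0 : n ≠ 0) (hf : AEStronglyMeasurable f μ) (h : Integrable (fun ω => f ω ^ n) μ) :
    MemLp f n μ := by
  rw [← integrable_norm_rpow_iff hf (by exact_mod_cast hn0) (by simp)]
  refine h.congr (ae_of_all _ fun ω => ?_)
  simp [Real.norm_eq_abs, hn.pow_abs]

lemma ProbabilityTheory.IndepFun.integral_add_pow [IsFiniteMeasure μ] {W z : Ω → ℝ} {n : ℕ}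
    (h : IndepFun W z μ) (hW : MemLp W n μ) (hz : MemLp z n μ) :
    ∫ ω, (W ω + z ω) ^ n ∂μ
      = ∑ k ∈ Finset.range (n + 1), (∫ ω, W ω ^ k ∂μ) * (∫ ω, z ω ^ (n - k) ∂μ) * n.choose k := by
  have hpow : ∀ k, IndepFun (fun ω => W ω ^ k) (fun ω => z ω ^ (n - k)) μ := fun k =>
    h.comp (measurable_id.pow_const k) (measurable_id.pow_const (n - k))
  simp_rw [add_pow]
  rw [integral_finsetSum]
  · refine Finset.sum_congr rfl fun k _ => ?_
    rw [integral_mul_const, (hpow k).integral_fun_mul_eq_mul_integral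
      (hW.1.pow k) (hz.1.pow (n - k))]
  · intro k hk
    have hk : k ≤ n := Nat.lt_succ_iff.1 (Finset.mem_range.1 hk)
    exact ((hpow k).integrable_mul (hW.integrable_pow_of_le hk)
      (hz.integrable_pow_of_le (Nat.sub_le n k))).mul_const _

variable [IsProbabilityMeasure μ] {ι : Type*} {X Y : ι → Ω → ℝ}

lemma ProbabilityTheory.iIndepFun.integral_sum_sq (hind : iIndepFun Y μ)
    (hY : ∀ i, MemLp (Y i) 2 μ) (hmean : ∀ i, ∫ ω, Y i ω ∂μ = 0) (s : Finset ι) :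
    ∫ ω, (∑ i ∈ s, Y i ω) ^ 2 ∂μ = ∑ i ∈ s, ∫ ω, Y i ω ^ 2 ∂μ := by
  have hsum_mean : ∫ ω, (∑ i ∈ s, Y i) ω ∂μ = 0 := by
    simp [integral_finsetSum s fun i _ => (hY i).integrable one_le_two, hmean]
  simp_rw [← Finset.sum_apply]
  rw [← variance_of_integral_eq_zero (memLp_finsetSum' s fun i _ => hY i).aemeasurable
    hsum_mean, IndepFun.variance_sum (fun i _ => hY i) fun i _ j _ hij => hind.indepFun hij]
  exact Finset.sum_congr rfl fun i _ => variance_of_integral_eq_zero (hY i).aemeasurable (hmean i)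

lemma ProbabilityTheory.iIndepFun.integral_sum_pow_four_le (hind : iIndepFun Y μ)
    (hY : ∀ i, MemLp (Y i) 4 μ) (hmean : ∀ i, ∫ ω, Y i ω ∂μ = 0) {K : ℝ}
    (hK : ∀ i, ∫ ω, Y i ω ^ 4 ∂μ ≤ K * (∫ ω, Y i ω ^ 2 ∂μ) ^ 2) (s : Finset ι) :
    ∫ ω, (∑ i ∈ s, Y i ω) ^ 4 ∂μ ≤ max K 3 * (∑ i ∈ s, ∫ ω, Y i ω ^ 2 ∂μ) ^ 2 := by
  classical
  have hY2 : ∀ i, MemLp (Y i) 2 μ := fun i => (hY i).mono_exponent (by norm_num)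
  induction s using Finset.induction_on with
  | empty => simp
  | @insert a s ha ih =>
    have hW_mean : ∫ ω, ∑ i ∈ s, Y i ω ∂μ = 0 := by
      simp [integral_finsetSum s fun i _ => (hY i).integrable (by norm_num), hmean]
    have hexpand : ∫ ω, (∑ i ∈ insert a s, Y i ω) ^ 4 ∂μ
        = ∫ ω, Y a ω ^ 4 ∂μ + 6 * (∫ ω, (∑ i ∈ s, Y i ω) ^ 2 ∂μ) * (∫ ω, Y a ω ^ 2 ∂μ)
          + ∫ ω, (∑ i ∈ s, Y i ω) ^ 4 ∂μ := by
      simp_rw [Finset.sum_insert ha, add_comm (Y a _), ← Finset.sum_apply]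
      rw [(hind.indepFun_finsetSum_of_notMem₀ (fun i => (hY i).1.aemeasurable) ha).integral_add_pow
        (memLp_finsetSum' s fun i _ => hY i) (hY a)]
      simp [Finset.sum_range_succ, hW_mean, hmean a, Nat.choose]
      ring
    set V := ∑ i ∈ s, ∫ ω, Y i ω ^ 2 ∂μ
    set v := ∫ ω, Y a ω ^ 2 ∂μ
    have hV : 0 ≤ V := Finset.sum_nonneg fun i _ => integral_nonneg fun ω => sq_nonneg _
    have hv : 0 ≤ v := integral_nonneg fun ω => sq_nonneg _
    have hKv : K * v ^ 2 ≤ max K 3 * v ^ 2 :=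
      mul_le_mul_of_nonneg_right (le_max_left _ _) (sq_nonneg v)
    have h3 : 3 * (V * v) ≤ max K 3 * (V * v) :=
      mul_le_mul_of_nonneg_right (le_max_right _ _) (mul_nonneg hV hv)
    rw [hexpand, hind.integral_sum_sq hY2 hmean s, Finset.sum_insert ha]
    nlinarith [hK a]

lemma ProbabilityTheory.iIndepFun.integral_sum_mul_pow_four_le (hind : iIndepFun X μ)
    (hX : ∀ i, MemLp (X i) 4 μ) (hmean : ∀ i, ∫ ω, X i ω ∂μ = 0)
    (hvar : ∀ i, ∫ ω, X i ω ^ 2 ∂μ = 1) {σ : ℝ} (hσ : ∀ i, ∫ ω, X i ω ^ 4 ∂μ ≤ σ)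
    (u : ι → ℝ) (s : Finset ι) :
    ∫ ω, (∑ i ∈ s, u i * X i ω) ^ 4 ∂μ ≤ max σ 3 * (∑ i ∈ s, u i ^ 2) ^ 2 := by
  have hK : ∀ i, ∫ ω, (u i * X i ω) ^ 4 ∂μ ≤ σ * (∫ ω, (u i * X i ω) ^ 2 ∂μ) ^ 2 := by
    intro i
    simp_rw [mul_pow, integral_const_mul, hvar, mul_one]
    nlinarith [hσ i, pow_nonneg (sq_nonneg (u i)) 2]
  have h := (hind.comp (fun i x => u i * x) fun i => measurable_const_mul (u i))
    |>.integral_sum_pow_four_le (fun i => (hX i).const_mul (u i))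
      (fun i => by simp [integral_const_mul, hmean]) hK s
  simpa only [Function.comp_apply, mul_pow, integral_const_mul, hvar, mul_one] using h

end Moments

section SecondMomentOfTrace

variable {Ω : Type*} [MeasurableSpace Ω] {μ : Measure Ω}

lemma integral_mul_le_sqrt_mul_sqrt_of_nonneg {f g : Ω → ℝ} (hf0 : 0 ≤ f) (hg0 : 0 ≤ g)
    (hf : MemLp f 2 μ) (hg : MemLp g 2 μ) :
    ∫ ω, f ω * g ω ∂μ ≤ √(∫ ω, f ω ^ 2 ∂μ) * √(∫ ω, g ω ^ 2 ∂μ) := by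
  have h := integral_mul_le_Lp_mul_Lq_of_nonneg Real.HolderConjugate.two_two
    (Eventually.of_forall hf0) (Eventually.of_forall hg0)
    (by simpa using hf) (by simpa using hg)
  simpa only [Real.sqrt_eq_rpow, Real.rpow_two, one_div] using h

lemma integral_sq_sum_le_sq_sum_sqrt {ι : Type*} (s : Finset ι) {w : ι → Ω → ℝ}
    (hw0 : ∀ i, 0 ≤ w i) (hw : ∀ i, MemLp (w i) 2 μ) :
    ∫ ω, (∑ i ∈ s, w i ω) ^ 2 ∂μ ≤ (∑ i ∈ s, √(∫ ω, w i ω ^ 2 ∂μ)) ^ 2 := by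
  have hint : ∀ i j, Integrable (fun ω => w i ω * w j ω) μ := fun i j =>
    (hw i).integrable_mul (hw j)
  simp_rw [sq (∑ i ∈ s, _), Finset.sum_mul_sum]
  rw [integral_finsetSum _ fun i _ => integrable_finsetSum _ fun j _ => hint i j]
  refine Finset.sum_le_sum fun i _ => ?_
  rw [integral_finsetSum _ fun j _ => hint i j]
  exact Finset.sum_le_sum fun j _ =>
    integral_mul_le_sqrt_mul_sqrt_of_nonneg (hw0 i) (hw0 j) (hw i) (hw j)

lemma Matrix.trace_mul_transpose_self {m n : Type*} [Fintype m] [Fintype n]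
    (A : Matrix m n ℝ) : trace (A * Aᵀ) = ∑ i, ∑ j, A i j ^ 2 := by
  simp [Matrix.trace, Matrix.mul_apply, sq]

lemma integral_trace_mul_transpose_sq_le [IsFiniteMeasure μ] {m n : Type*} [Fintype m] [Fintype n]
    {D : Ω → Matrix m n ℝ}
    (hD : ∀ i j, MemLp (fun ω => D ω i j) 4 μ) {L : ℝ} (hL : 0 ≤ L) {V : m → n → ℝ}
    (hV0 : ∀ i j, 0 ≤ V i j) (hV : ∀ i j, ∫ ω, D ω i j ^ 4 ∂μ ≤ L * V i j ^ 2) :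
    ∫ ω, trace (D ω * (D ω)ᵀ) ^ 2 ∂μ ≤ L * (∑ i, ∑ j, V i j) ^ 2 := by
  have hsq : ∀ x : m × n, MemLp (fun ω => D ω x.1 x.2 ^ 2) 2 μ := fun x =>
    (memLp_two_iff_integrable_sq ((hD x.1 x.2).1.pow 2)).2
      (by simpa only [Pi.pow_apply, ← pow_mul] using (hD x.1 x.2).integrable_pow_of_le le_rfl)
  have hsqrt : ∀ x : m × n, √(∫ ω, (D ω x.1 x.2 ^ 2) ^ 2 ∂μ) ≤ √L * V x.1 x.2 := fun x => by
    rw [← Real.sqrt_sq (hV0 x.1 x.2), ← Real.sqrt_mul hL]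
    simpa only [← pow_mul] using Real.sqrt_le_sqrt (hV x.1 x.2)
  simp_rw [trace_mul_transpose_self, ← Fintype.sum_prod_type']
  calc ∫ ω, (∑ x : m × n, D ω x.1 x.2 ^ 2) ^ 2 ∂μ
      ≤ (∑ x : m × n, √(∫ ω, (D ω x.1 x.2 ^ 2) ^ 2 ∂μ)) ^ 2 :=
        integral_sq_sum_le_sq_sum_sqrt _ (fun x ω => sq_nonneg _) hsq
    _ ≤ (√L * ∑ x : m × n, V x.1 x.2) ^ 2 := by
        rw [Finset.mul_sum]
        gcongr with x
        exact hsqrt x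
    _ = L * (∑ x : m × n, V x.1 x.2) ^ 2 := by rw [mul_pow, Real.sq_sqrt hL]

end SecondMomentOfTrace

lemma Fin.sum_ite_val_eq {M : Type*} [AddCommMonoid M] (m N : ℕ) (g : ℕ → M) :
    ∑ k : Fin m, (if (k : ℕ) = N then g k else 0) = if N < m then g N else 0 := by
  rw [Fin.sum_univ_eq_sum_range (fun k => if k = N then g k else 0), Finset.sum_ite_eq']
  simp

lemma Kmat_transpose_pow_apply (m j : ℕ) (a b : Fin m) :
    ((Kmat m)ᵀ ^ j) a b = if (b : ℕ) = a + j then 1 else 0 := by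
  induction j generalizing b with
  | zero => simp [Matrix.one_apply, Fin.ext_iff, eq_comm]
  | succ j ih =>
    simp only [pow_succ, Matrix.mul_apply, ih]
    simp only [Matrix.transpose_apply, Kmat, Matrix.of_apply, ite_mul, one_mul, zero_mul]
    rw [Fin.sum_ite_val_eq m (a + j) fun k => if (b : ℕ) = k + 1 then (1 : ℝ) else 0]
    have := b.isLt
    split_ifs <;> first | rfl | omega

lemma Kmat_pow_apply (m j : ℕ) (a b : Fin m) :
    (Kmat m ^ j) a b = if (a : ℕ) = b + j then 1 else 0 := by
  rw [← Matrix.transpose_apply (Kmat m ^ j), Matrix.transpose_pow, Kmat_transpose_pow_apply]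

lemma chiK_apply (c : ℕ → ℝ) (m : ℕ) (a b : Fin m) :
    chiK c m a b = if (a : ℕ) ≤ b then c (b - a) else 0 := by
  simp only [chiK, Matrix.sum_apply, Matrix.smul_apply, Kmat_transpose_pow_apply, smul_eq_mul,
    mul_ite, mul_one, mul_zero]
  have hcond : ∀ x : ℕ, (b : ℕ) = a + x ↔ (a : ℕ) ≤ b ∧ x = b - a := fun x => by omega
  simp_rw [hcond, ite_and]
  split_ifs with hab
  · rw [Finset.sum_ite_eq', if_pos (Finset.mem_range.2 (by omega))]
  · simp

lemma chibarK_apply (c : ℕ → ℝ) (m : ℕ) (a b : Fin m) :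
    chibarK c m a b = if (b : ℕ) ≤ a then c (m - (a - b)) else 0 := by
  simp only [chibarK, Matrix.sum_apply, Matrix.smul_apply, Kmat_pow_apply, smul_eq_mul,
    mul_ite, mul_one, mul_zero]
  have hcond : ∀ x : ℕ, (a : ℕ) = b + x ↔ (b : ℕ) ≤ a ∧ x = a - b := fun x => by omega
  simp_rw [hcond, ite_and]
  split_ifs with hab
  · rw [Finset.sum_ite_eq', if_pos (Finset.mem_range.2 (by omega))]
  · simp

lemma OmegaMat_apply (c : ℕ → ℝ) (n : ℕ) (i : Fin n) (t : Fin (n + 1)) :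
    OmegaMat c n i t = (if (i : ℕ) + 1 ≤ t then c (t - (i + 1)) else 0)
      + (if (t : ℕ) ≤ i then c (n + 1 - (i - t)) else 0) := by
  rw [OmegaMat, Matrix.fromCols_mul_fromRows, Matrix.add_apply, Matrix.mul_apply, Matrix.mul_apply]
  simp only [Matrix.of_apply, ite_mul, one_mul, zero_mul, chiK_apply, chibarK_apply]
  rw [Fin.sum_ite_val_eq (n + 1) (i + 1) fun k => if k ≤ t then c (t - k) else 0,
    Fin.sum_ite_val_eq (n + 1) i fun k => if (t : ℕ) ≤ k then c (n + 1 - (k - t)) else 0]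
  simp

lemma sum_mul_OmegaMat_apply (c : ℕ → ℝ) (n : ℕ) (f : ℤ → ℝ) (t : Fin (n + 1)) :
    ∑ i : Fin n, f i * OmegaMat c n i t
      = ∑ j ∈ Finset.range t, c j * f (t - 1 - j)
        + ∑ j ∈ Finset.Icc ((t : ℕ) + 2) (n + 1), c j * f (n + 1 + t - j) := by
  have ht := t.isLt
  simp only [OmegaMat_apply, mul_add, Finset.sum_add_distrib, mul_ite, mul_zero]
  rw [Fin.sum_univ_eq_sum_range (fun i => if i + 1 ≤ t then f i * c (t - (i + 1)) else 0),
    Fin.sum_univ_eq_sum_range (fun i => if (t : ℕ) ≤ i then f i * c (n + 1 - (i - t)) else 0),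
    ← Finset.sum_filter, ← Finset.sum_filter]
  congr 1
  · refine Finset.sum_nbij' (fun i => t - 1 - i) (fun j => t - 1 - j) ?_ ?_ ?_ ?_ ?_ <;>
      simp only [Finset.mem_filter, Finset.mem_range] <;> intro i hi
    any_goals omega
    rw [mul_comm, show t - (i + 1) = t - 1 - i by omega]
    push_cast [show i ≤ t - 1 by omega, show 1 ≤ (t : ℕ) by omega]
    ring_nf
  · refine Finset.sum_nbij' (fun i => n + 1 + t - i) (fun j => n + 1 + t - j) ?_ ?_ ?_ ?_ ?_ <;>
      simp only [Finset.mem_filter, Finset.mem_range, Finset.mem_Icc] <;> intro i hi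
    any_goals omega
    rw [mul_comm, show n + 1 - (i - t) = n + 1 + t - i by omega]
    push_cast [show i ≤ n + 1 + t by omega]
    ring_nf

/-- The coefficient of `Z_{an+t-n-j}` in entry `(a, t)` of `𝐙Ω - 𝐗̄`: the band of `𝐙Ω` through
`χ(Kᵀ)` contributes `c_j` for `j < t`, and off the zero border `𝐗̃` contributes `-c_j` for all
`j ≤ n`. -/
def hatBarCoeff (c : ℕ → ℝ) (a t j : ℕ) : ℝ :=
  (if j < t then c j else 0) - (if a ≠ 0 ∧ t ≠ 0 then c j else 0)

lemma hatBarCoeff_sq_le (c : ℕ → ℝ) (a t j : ℕ) : hatBarCoeff c a t j ^ 2 ≤ c j ^ 2 := by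
  unfold hatBarCoeff
  split_ifs <;> simp [sq_nonneg]

lemma sum_hatBarCoeff_sq_le (c : ℕ → ℝ) (n a t : ℕ) :
    ∑ j ∈ Finset.range (n + 1), hatBarCoeff c a t j ^ 2
      ≤ ∑ j ∈ Finset.Ico (if a = 0 then 0 else t) (n + 2), c j ^ 2 := by
  have hvanish : ∀ j ∈ Finset.range (n + 1), hatBarCoeff c a t j ^ 2 ≠ 0 →
      (if a = 0 then 0 else t) ≤ j := by
    intro j _ hj
    by_contra hlt
    apply hj
    rcases eq_or_ne a 0 with rfl | ha
    · simp at hlt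
    · rw [if_neg ha, not_le] at hlt
      simp [hatBarCoeff, hlt, ha, show t ≠ 0 by omega]
  rw [← Finset.sum_filter_of_ne hvanish]
  refine (Finset.sum_le_sum fun j _ => hatBarCoeff_sq_le c a t j).trans
    (Finset.sum_le_sum_of_subset_of_nonneg ?_ fun j _ _ => sq_nonneg _)
  intro j
  simp only [Finset.mem_filter, Finset.mem_range, Finset.mem_Ico]
  omega

lemma mul_OmegaMat_sub_border_apply (c : ℕ → ℝ) (z : ℤ → ℝ) {n q : ℕ}
    {Zm : Matrix (Fin (q + 1)) (Fin n) ℝ} (hZm : ∀ i t, Zm i t = z ((i : ℤ) * n + (t : ℤ) + 1 - n))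
    {M : Matrix (Fin q) (Fin n) ℝ}
    (hM : ∀ i t, M i t = ∑ j ∈ Finset.range (n + 1), c j * z ((i : ℤ) * n + (t : ℤ) + 1 - j))
    (a : Fin (q + 1)) (t : Fin (n + 1)) :
    (Zm * OmegaMat c n - border M) a t
      = ∑ j ∈ Finset.range (n + 1), hatBarCoeff c a t j * z (a * n + t - n - j)
        + ∑ j ∈ Finset.Icc ((t : ℕ) + 2) (n + 1), c j * z (a * n + t + 2 - j) := by
  have ht := t.isLt
  have hprod : (Zm * OmegaMat c n) a t
      = ∑ j ∈ Finset.range (n + 1), (if j < t then c j else 0) * z (a * n + t - n - j)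
        + ∑ j ∈ Finset.Icc ((t : ℕ) + 2) (n + 1), c j * z (a * n + t + 2 - j) := by
    simp only [Matrix.mul_apply, hZm]
    have hrange : (Finset.range (n + 1)).filter (· < (t : ℕ)) = Finset.range t := by
      ext j; simp only [Finset.mem_filter, Finset.mem_range]; omega
    rw [sum_mul_OmegaMat_apply c n (fun k => z (a * n + k + 1 - n))]
    simp_rw [ite_mul, zero_mul]
    rw [← Finset.sum_filter, hrange]
    congr 1 <;> refine Finset.sum_congr rfl fun j _ => ?_ <;> ring_nf
  have hborder : border M a t
      = ∑ j ∈ Finset.range (n + 1), (if (a : ℕ) ≠ 0 ∧ (t : ℕ) ≠ 0 then c j else 0)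
          * z (a * n + t - n - j) := by
    by_cases h : (a : ℕ) ≠ 0 ∧ (t : ℕ) ≠ 0
    · simp only [border, Matrix.of_apply, dif_neg h.1, dif_neg h.2, hM, if_pos h]
      refine Finset.sum_congr rfl fun j _ => ?_
      push_cast [Nat.one_le_iff_ne_zero.2 h.1, Nat.one_le_iff_ne_zero.2 h.2]
      ring_nf
    · simp only [if_neg h, zero_mul, Finset.sum_const_zero, border, Matrix.of_apply]
      split_ifs <;> first | rfl | omega
  rw [Matrix.sub_apply, hprod, hborder]
  simp only [hatBarCoeff, sub_mul, Finset.sum_sub_distrib]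
  ring

lemma mul_OmegaMat_zero_sub_border (c : ℕ → ℝ) {q : ℕ} (Zm : Matrix (Fin (q + 1)) (Fin 0) ℝ)
    (M : Matrix (Fin q) (Fin 0) ℝ) : Zm * OmegaMat c 0 - border M = 0 := by
  ext a t
  simp [border, Fin.fin_one_eq_zero t]

lemma sum_range_sum_Ico_eq (f : ℕ → ℝ) (m : ℕ) :
    ∑ t ∈ Finset.range m, ∑ j ∈ Finset.Ico t m, f j
      = ∑ j ∈ Finset.range m, ((j : ℝ) + 1) * f j := by
  rw [Finset.range_eq_Ico, Finset.sum_Ico_Ico_comm 0 m fun _ j => f j]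
  simp

lemma sum_mul_sq_le_tsum {c : ℕ → ℝ} {C δ : ℝ} (hδ : 0 < δ)
    (hc : ∀ j : ℕ, |c j| ≤ C * ((j : ℝ) + 1) ^ (-(1 + δ))) (m : ℕ) :
    ∑ j ∈ Finset.range m, ((j : ℝ) + 1) * c j ^ 2
      ≤ C ^ 2 * ∑' j : ℕ, ((j : ℝ) + 1) ^ (-(1 + 2 * δ)) := by
  have hsummable : Summable fun j : ℕ => ((j : ℝ) + 1) ^ (-(1 + 2 * δ)) := by
    simpa using (summable_nat_add_iff 1).2
      (Real.summable_nat_rpow.2 (by linarith : -(1 + 2 * δ) < -1))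
  have hterm : ∀ j : ℕ, ((j : ℝ) + 1) * c j ^ 2 ≤ C ^ 2 * ((j : ℝ) + 1) ^ (-(1 + 2 * δ)) := by
    intro j
    have hj : (0 : ℝ) < j + 1 := by positivity
    have hsq : c j ^ 2 ≤ (C * ((j : ℝ) + 1) ^ (-(1 + δ))) ^ 2 := by
      rw [← sq_abs (c j)]; exact pow_le_pow_left₀ (abs_nonneg _) (hc j) 2
    calc ((j : ℝ) + 1) * c j ^ 2 ≤ ((j : ℝ) + 1) * (C * ((j : ℝ) + 1) ^ (-(1 + δ))) ^ 2 :=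
          mul_le_mul_of_nonneg_left hsq hj.le
      _ = C ^ 2 * (((j : ℝ) + 1) ^ (1 : ℝ) * ((j : ℝ) + 1) ^ (-(1 + δ) * 2)) := by
          rw [Real.rpow_one, Real.rpow_mul hj.le, Real.rpow_two]; ring
      _ = C ^ 2 * ((j : ℝ) + 1) ^ (-(1 + 2 * δ)) := by
          rw [← Real.rpow_add hj]; ring_nf
  calc ∑ j ∈ Finset.range m, ((j : ℝ) + 1) * c j ^ 2
      ≤ C ^ 2 * ∑ j ∈ Finset.range m, ((j : ℝ) + 1) ^ (-(1 + 2 * δ)) := by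
        rw [Finset.mul_sum]; exact Finset.sum_le_sum fun j _ => hterm j
    _ ≤ C ^ 2 * ∑' j : ℕ, ((j : ℝ) + 1) ^ (-(1 + 2 * δ)) := by
        gcongr; exact hsummable.sum_le_tsum _ fun j _ => by positivity

lemma sum_sum_tail_sq_le (c : ℕ → ℝ) (n q : ℕ) :
    ∑ a : Fin (q + 1), ∑ t : Fin (n + 1),
        ∑ j ∈ Finset.Ico (if (a : ℕ) = 0 then 0 else (t : ℕ)) (n + 2), c j ^ 2
      ≤ ((n : ℝ) + 1 + q) * ∑ j ∈ Finset.range (n + 2), ((j : ℝ) + 1) * c j ^ 2 := by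
  set B := ∑ j ∈ Finset.range (n + 2), ((j : ℝ) + 1) * c j ^ 2
  have hfirst : ∑ j ∈ Finset.Ico 0 (n + 2), c j ^ 2 ≤ B := by
    rw [← Finset.range_eq_Ico]
    exact Finset.sum_le_sum fun j _ => le_mul_of_one_le_left (sq_nonneg _) (by simp)
  have hrow : ∑ t : Fin (n + 1), ∑ j ∈ Finset.Ico (t : ℕ) (n + 2), c j ^ 2 ≤ B := by
    rw [Fin.sum_univ_eq_sum_range (fun t => ∑ j ∈ Finset.Ico t (n + 2), c j ^ 2)]
    refine (Finset.sum_le_sum_of_subset_of_nonneg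
      (Finset.range_subset_range.2 (Nat.le_succ (n + 1)))
      fun t _ _ => Finset.sum_nonneg fun j _ => sq_nonneg _).trans_eq ?_
    exact sum_range_sum_Ico_eq _ _
  rw [Fin.sum_univ_succ]
  simp only [Fin.val_zero, Fin.val_succ, if_pos, Nat.succ_ne_zero, if_false]
  calc _ ≤ ∑ _t : Fin (n + 1), B + ∑ _a : Fin q, B :=
        add_le_add (Finset.sum_le_sum fun t _ => hfirst) (Finset.sum_le_sum fun a _ => hrow)
    _ = ((n : ℝ) + 1 + q) * B := by simp; ring

lemma add_pow_four_le (a b : ℝ) : (a + b) ^ 4 ≤ 8 * (a ^ 4 + b ^ 4) := by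
  have h : 8 * (a ^ 4 + b ^ 4) - (a + b) ^ 4
      = (a - b) ^ 2 * (5 * (a + b) ^ 2 + 2 * a ^ 2 + 2 * b ^ 2) := by ring
  have hpos : 0 ≤ (a - b) ^ 2 * (5 * (a + b) ^ 2 + 2 * a ^ 2 + 2 * b ^ 2) := by positivity
  linarith

section HatMinusBar

variable {Ω : Type*} [MeasureSpace Ω] [IsProbabilityMeasure (ℙ : Measure Ω)]

lemma mul_OmegaMat_sub_border_apply_memLp_and_integral_pow_four_le (Z : ℤ → Ω → ℝ)
    (hZ : ∀ t, MemLp (Z t) 4) (hZindep : iIndepFun Z ℙ) (hZmean : ∀ t, ∫ ω, Z t ω = 0)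
    (hZvar : ∀ t, ∫ ω, Z t ω ^ 2 = 1)
    {σ4 : ℝ} (hσ4 : ∀ t, ∫ ω, Z t ω ^ 4 ≤ σ4) (c : ℕ → ℝ) {n q : ℕ}
    {Zm : Ω → Matrix (Fin (q + 1)) (Fin n) ℝ}
    (hZm : ∀ ω i t, Zm ω i t = Z ((i : ℤ) * n + (t : ℤ) + 1 - n) ω)
    {M : Ω → Matrix (Fin q) (Fin n) ℝ}
    (hM : ∀ ω i t, M ω i t =
      ∑ j ∈ Finset.range (n + 1), c j * Z ((i : ℤ) * n + (t : ℤ) + 1 - j) ω)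
    (a : Fin (q + 1)) (t : Fin (n + 1)) :
    MemLp (fun ω => (Zm ω * OmegaMat c n - border (M ω)) a t) 4 ∧
      ∫ ω, (Zm ω * OmegaMat c n - border (M ω)) a t ^ 4 ≤ 16 * max σ4 3 *
        (∑ j ∈ Finset.Ico (if (a : ℕ) = 0 then 0 else (t : ℕ)) (n + 2), c j ^ 2) ^ 2 := by
  set V := ∑ j ∈ Finset.Ico (if (a : ℕ) = 0 then 0 else (t : ℕ)) (n + 2), c j ^ 2
  set e₁ : ℕ → ℤ := fun j => a * n + t - n - j
  set e₂ : ℕ → ℤ := fun j => a * n + t + 2 - j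
  have he₁ : e₁.Injective := fun j k h => by simp only [e₁] at h; omega
  have he₂ : e₂.Injective := fun j k h => by simp only [e₂] at h; omega
  set P : Ω → ℝ := fun ω => ∑ j ∈ Finset.range (n + 1), hatBarCoeff c a t j * Z (e₁ j) ω
  set R : Ω → ℝ := fun ω => ∑ j ∈ Finset.Icc ((t : ℕ) + 2) (n + 1), c j * Z (e₂ j) ω
  have hD : (fun ω => (Zm ω * OmegaMat c n - border (M ω)) a t) = P + R := by
    ext ω; exact mul_OmegaMat_sub_border_apply c (fun k => Z k ω) (hZm ω) (hM ω) a t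
  have hP : MemLp P 4 := memLp_finsetSum _ fun j _ => (hZ (e₁ j)).const_mul _
  have hR : MemLp R 4 := memLp_finsetSum _ fun j _ => (hZ (e₂ j)).const_mul _
  have hP4 : ∫ ω, P ω ^ 4 ≤ max σ4 3 * V ^ 2 := by
    refine ((hZindep.precomp he₁).integral_sum_mul_pow_four_le (fun j => hZ _)
      (fun j => hZmean _) (fun j => hZvar _) (fun j => hσ4 _) _ _).trans ?_
    gcongr
    exact sum_hatBarCoeff_sq_le c n a t
  have hR4 : ∫ ω, R ω ^ 4 ≤ max σ4 3 * V ^ 2 := by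
    refine ((hZindep.precomp he₂).integral_sum_mul_pow_four_le (fun j => hZ _)
      (fun j => hZmean _) (fun j => hZvar _) (fun j => hσ4 _) _ _).trans ?_
    gcongr
    refine Finset.sum_le_sum_of_subset_of_nonneg (fun j => ?_) fun j _ _ => sq_nonneg _
    simp only [Finset.mem_Icc, Finset.mem_Ico]
    split_ifs <;> omega
  refine ⟨hD ▸ hP.add hR, ?_⟩
  calc ∫ ω, (Zm ω * OmegaMat c n - border (M ω)) a t ^ 4
      = ∫ ω, (P ω + R ω) ^ 4 := by simp_rw [← Pi.add_apply P R, ← hD]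
    _ ≤ ∫ ω, 8 * (P ω ^ 4 + R ω ^ 4) :=
        integral_mono ((hP.add hR).integrable_pow_of_le le_rfl)
          (((hP.integrable_pow_of_le le_rfl).add (hR.integrable_pow_of_le le_rfl)).const_mul 8)
          fun ω => add_pow_four_le (P ω) (R ω)
    _ = 8 * ((∫ ω, P ω ^ 4) + ∫ ω, R ω ^ 4) := by
        rw [integral_const_mul, integral_add (hP.integrable_pow_of_le le_rfl)
          (hR.integrable_pow_of_le le_rfl)]
    _ ≤ 16 * max σ4 3 * V ^ 2 := by linarith

lemma integral_trace_mul_OmegaMat_sub_border_sq_le (Z : ℤ → Ω → ℝ) (hZ : ∀ t, MemLp (Z t) 4)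
    (hZindep : iIndepFun Z ℙ) (hZmean : ∀ t, ∫ ω, Z t ω = 0) (hZvar : ∀ t, ∫ ω, Z t ω ^ 2 = 1)
    {σ4 : ℝ} (hσ4 : ∀ t, ∫ ω, Z t ω ^ 4 ≤ σ4) {c : ℕ → ℝ} {C δ : ℝ} (hδ : 0 < δ)
    (hc : ∀ j : ℕ, |c j| ≤ C * ((j : ℝ) + 1) ^ (-(1 + δ))) {n q : ℕ}
    {Zm : Ω → Matrix (Fin (q + 1)) (Fin n) ℝ}
    (hZm : ∀ ω i t, Zm ω i t = Z ((i : ℤ) * n + (t : ℤ) + 1 - n) ω)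
    {M : Ω → Matrix (Fin q) (Fin n) ℝ}
    (hM : ∀ ω i t, M ω i t =
      ∑ j ∈ Finset.range (n + 1), c j * Z ((i : ℤ) * n + (t : ℤ) + 1 - j) ω) :
    ∫ ω, trace ((Zm ω * OmegaMat c n - border (M ω)) * (Zm ω * OmegaMat c n - border (M ω))ᵀ) ^ 2
      ≤ 16 * max σ4 3 * (C ^ 2 * ∑' j : ℕ, ((j : ℝ) + 1) ^ (-(1 + 2 * δ))) ^ 2
        * ((n : ℝ) + 1 + q) ^ 2 := by
  have hentry := mul_OmegaMat_sub_border_apply_memLp_and_integral_pow_four_le Z hZ hZindep hZmean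
    hZvar hσ4 c hZm hM
  refine (integral_trace_mul_transpose_sq_le (fun a t => (hentry a t).1) (by positivity)
    (fun a t => Finset.sum_nonneg fun j _ => sq_nonneg (c j)) fun a t => (hentry a t).2).trans ?_
  set G := ∑' j : ℕ, ((j : ℝ) + 1) ^ (-(1 + 2 * δ))
  calc _ ≤ 16 * max σ4 3 * (((n : ℝ) + 1 + q) * (C ^ 2 * G)) ^ 2 := by
        gcongr
        exact (sum_sum_tail_sq_le c n q).trans
          (mul_le_mul_of_nonneg_left (sum_mul_sq_le_tsum hδ hc _) (by positivity))
    _ = _ := by ring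

end HatMinusBar

lemma isBigO_sq_div_pow_four {p : ℕ → ℕ} {y : ℝ} (hy : 0 < y)
    (hpn : Tendsto (fun n => (p n : ℝ) / n) atTop (𝓝 y)) :
    (fun n : ℕ => ((n : ℝ) + 1 + p n) ^ 2 / (p n : ℝ) ^ 4) =O[atTop] fun n => ((n : ℝ) ^ 2)⁻¹ := by
  have hlim : Tendsto (fun n : ℕ => (1 + 1 / (n : ℝ) + p n / n) ^ 2 / (p n / n : ℝ) ^ 4) atTop
      (𝓝 ((1 + 0 + y) ^ 2 / y ^ 4)) :=
    (((tendsto_const_nhds.add tendsto_one_div_atTop_nhds_zero_nat).add hpn).pow 2).div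
      (hpn.pow 4) (by positivity)
  refine isBigO_of_div_tendsto_nhds ?_ _ (hlim.congr' ?_) <;>
    filter_upwards [eventually_ne_atTop 0] with n hn
  · intro h; simp_all
  · have : (n : ℝ) ≠ 0 := by exact_mod_cast hn
    simp only [Pi.div_apply]
    field_simp

lemma exists_inv_pow_four_mul_le_div_sq {p : ℕ → ℕ} {y : ℝ} (hy : 0 < y)
    (hpn : Tendsto (fun n => (p n : ℝ) / n) atTop (𝓝 y)) {v : ℕ → ℝ} (hv0 : ∀ n, 0 ≤ v n)
    (hv_zero : v 0 = 0) {K₁ : ℝ} (hv : ∀ n, v n ≤ K₁ * ((n : ℝ) + 1 + p n) ^ 2) :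
    ∃ K : ℝ, ∀ n : ℕ, ((p n : ℝ) ^ 4)⁻¹ * v n ≤ K / (n : ℝ) ^ 2 := by
  have hO : (fun n => ((p n : ℝ) ^ 4)⁻¹ * v n) =O[atTop] fun n => ((n : ℝ) ^ 2)⁻¹ := by
    refine (IsBigO.of_bound K₁ (Eventually.of_forall fun n => ?_)).trans
      (isBigO_sq_div_pow_four hy hpn)
    have hvn := hv0 n
    rw [Real.norm_of_nonneg (by positivity), Real.norm_of_nonneg (by positivity), mul_div,
      div_eq_inv_mul]
    exact mul_le_mul_of_nonneg_left (hv n) (by positivity)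
  have hzero : ∀ n : ℕ, ((n : ℝ) ^ 2)⁻¹ = 0 → ((p n : ℝ) ^ 4)⁻¹ * v n = 0 := by
    intro n hn
    obtain rfl : n = 0 := by simpa using hn
    rw [hv_zero, mul_zero]
  obtain ⟨K, hK⟩ := isBigO_top.1 (hO.nat_of_atTop (l := ⊤) (Eventually.of_forall hzero))
  refine ⟨K, fun n => (le_abs_self _).trans ((hK n).trans_eq ?_)⟩
  rw [Real.norm_of_nonneg (by positivity), div_eq_mul_inv]

theorem second_moment_of_hat_minus_bar_general
    {ΩS : Type*} [MeasureSpace ΩS] [IsProbabilityMeasure (ℙ : Measure ΩS)]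
    (Z : ℤ → ΩS → ℝ) (hZmeas : ∀ t, Measurable (Z t))
    (hZindep : iIndepFun Z ℙ)
    -- condition (Z1)
    (hZmean : ∀ t, ∫ ω, Z t ω = 0) (hZvar : ∀ t, ∫ ω, (Z t ω) ^ 2 = 1)
    (σ4 : ℝ) (hZ4int : ∀ t, Integrable (fun ω => (Z t ω) ^ 4))
    (hσ4 : ∀ t, ∫ ω, (Z t ω) ^ 4 ≤ σ4)
    -- coefficient decay
    (c : ℕ → ℝ) (C δ : ℝ) (hδ : 0 < δ)
    (hc : ∀ j : ℕ, |c j| ≤ C * ((j : ℝ) + 1) ^ (-(1 + δ)))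
    -- aspect ratio
    (p : ℕ → ℕ) (y : ℝ) (hy : 0 < y)
    (hpn : Tendsto (fun n => (p n : ℝ) / (n : ℝ)) atTop (𝓝 y))
    -- the matrices 𝐙 and 𝐗̃
    (Zm : (n : ℕ) → ΩS → Matrix (Fin (p n + 1)) (Fin n) ℝ)
    (hZm : ∀ n ω i t, Zm n ω i t = Z ((i : ℤ) * n + (t : ℤ) + 1 - (n : ℤ)) ω)
    (Mt : (n : ℕ) → ΩS → Matrix (Fin (p n)) (Fin n) ℝ)
    (hMt : ∀ n ω i t, Mt n ω i t =
      ∑ j ∈ Finset.range (n + 1), c j * Z ((i : ℤ) * n + (t : ℤ) + 1 - (j : ℤ)) ω) :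
    ∃ K : ℝ, ∀ n : ℕ,
      ((p n : ℝ) ^ 4)⁻¹ *
        ∫ ω, (Matrix.trace ((Zm n ω * OmegaMat c n - border (Mt n ω)) *
              (Zm n ω * OmegaMat c n - border (Mt n ω))ᵀ)) ^ 2
        ≤ K / (n : ℝ) ^ 2 := by
  have hZ : ∀ t, MemLp (Z t) 4 := fun t =>
    memLp_of_integrable_pow_of_even (by decide) (by norm_num) (hZmeas t).aestronglyMeasurable
      (hZ4int t)
  refine exists_inv_pow_four_mul_le_div_sq hy hpn (fun n => integral_nonneg fun ω => sq_nonneg _)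
    ?_ fun n => integral_trace_mul_OmegaMat_sub_border_sq_le Z hZ hZindep hZmean hZvar hσ4 hδ hc
      (hZm n) (hMt n)
  simp only [mul_OmegaMat_zero_sub_border, Matrix.zero_mul, trace_zero]
  simp

/-- **Second moment of the difference `𝐗̂ - 𝐗̄`.** Under (Z1) and polynomial decay of the
coefficients, in the regime `p/n → y ∈ (0,∞)`:
`p⁻⁴ E[tr((𝐗̂ - 𝐗̄)(𝐗̂ - 𝐗̄)ᵀ)]² = O(n⁻²)`, where `𝐗̂ = 𝐙Ω` and `𝐗̄` is the
zero-bordered truncated matrix `𝐗̃`. -/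
theorem second_moment_of_hat_minus_bar
    {ΩS : Type*} [MeasureSpace ΩS] [IsProbabilityMeasure (ℙ : Measure ΩS)]
    (Z : ℤ → ΩS → ℝ) (hZmeas : ∀ t, Measurable (Z t))
    (hZindep : iIndepFun Z ℙ)
    -- condition (Z1)
    (hZmean : ∀ t, ∫ ω, Z t ω = 0) (hZvar : ∀ t, ∫ ω, (Z t ω) ^ 2 = 1)
    (σ4 : ℝ) (hZ4int : ∀ t, Integrable (fun ω => (Z t ω) ^ 4))
    (hσ4 : ∀ t, ∫ ω, (Z t ω) ^ 4 ≤ σ4)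
    -- coefficient decay
    (c : ℕ → ℝ) (C δ : ℝ) (hC : 0 < C) (hδ : 0 < δ)
    (hc : ∀ j : ℕ, |c j| ≤ C * ((j : ℝ) + 1) ^ (-(1 + δ)))
    -- aspect ratio
    (p : ℕ → ℕ) (y : ℝ) (hy : 0 < y)
    (hpn : Tendsto (fun n => (p n : ℝ) / (n : ℝ)) atTop (𝓝 y))
    -- the matrices 𝐙 and 𝐗̃
    (Zm : (n : ℕ) → ΩS → Matrix (Fin (p n + 1)) (Fin n) ℝ)
    (hZm : ∀ n ω i t, Zm n ω i t = Z ((i : ℤ) * n + (t : ℤ) + 1 - (n : ℤ)) ω)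
    (Mt : (n : ℕ) → ΩS → Matrix (Fin (p n)) (Fin n) ℝ)
    (hMt : ∀ n ω i t, Mt n ω i t =
      ∑ j ∈ Finset.range (n + 1), c j * Z ((i : ℤ) * n + (t : ℤ) + 1 - (j : ℤ)) ω) :
    ∃ K : ℝ, ∀ n : ℕ,
      ((p n : ℝ) ^ 4)⁻¹ *
        ∫ ω, (Matrix.trace ((Zm n ω * OmegaMat c n - border (Mt n ω)) *
              (Zm n ω * OmegaMat c n - border (Mt n ω))ᵀ)) ^ 2
        ≤ K / (n : ℝ) ^ 2 :=
  second_moment_of_hat_minus_bar_general Z hZmeas hZindep hZmean hZvar σ4 hZ4int hσ4 c C δ hδ hc p y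
    hy hpn Zm hZm Mt hMt
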